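/- arXiv:1711.10418 — 2 statements merged into one kernel-verified Lean document; each statement's English description precedes it below -/
import Mathlib

section
/- Let (b,θ,q,m) be a magnetic graph over X and p ∈ [1,∞). Then for every finitely supported function f : X → ℂ: ∫₀^∞ ( ι_{1,θ}(Ω_t(|f|^p)) + (1/2) Σ_{(x,y)∈∂Ω_t(|f|^p)} b(x,y) ) dt ≤ (√(p²+1)/2) · Σ_{x,y∈X} b(x,y) |f(x) − e^{iθ(x,y)} f(y)| · ((|f(x)|^p + |f(y)|^p)/2)^{(p−1)/p}, where for g : X → [0,∞) and t ≥ 0, Ω_t(g) = {x ∈ X : g(x) > t}. -/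
open Complex MeasureTheory
open scoped Classical

noncomputable section

variable {X : Type*}

/-- The structural hypotheses of a magnetic graph `(b, θ, q, m)` over `X`:
`b` is nonnegative, symmetric, has zero diagonal and summable rows; the
magnetic potential `θ` is antisymmetric modulo `2π`; the measure `m` is positive. -/
def IsMagneticGraph (b θ : X → X → ℝ) (m : X → ℝ) : Prop :=
  (∀ x y, 0 ≤ b x y) ∧ (∀ x y, b x y = b y x) ∧ (∀ x, b x x = 0) ∧
  (∀ x, Summable fun y => b x y) ∧
  (∀ x y, ∃ k : ℤ, θ x y + θ y x = 2 * Real.pi * k) ∧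
  (∀ x, 0 < m x)

/-- The `p`-frustration index `ι_{p,θ}(W)` of a finite set `W`. -/
def frust (b θ : X → X → ℝ) (p : ℝ) (W : Finset X) : ℝ :=
  sInf {r : ℝ | ∃ τ : X → ℂ, (∀ x ∈ W, ‖τ x‖ = 1) ∧
    r = (1 / 2) * ∑ x ∈ W, ∑ y ∈ W,
      b x y * ‖τ x - Complex.exp ((θ x y : ℂ) * Complex.I) * τ y‖ ^ p}

/-- The measure `b(∂W)` of the boundary `∂W = (W×(X∖W)) ∪ ((X∖W)×W)`. -/
def bBoundary (b : X → X → ℝ) (W : Finset X) : ℝ :=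
  (∑ x ∈ W, ∑' y : {y : X // y ∉ W}, b x ↑y) +
  (∑ y ∈ W, ∑' x : {x : X // x ∉ W}, b ↑x y)

/-- `(a,k)_p`-magnetic-sparseness. -/
def MagSparse (b θ : X → X → ℝ) (q m : X → ℝ) (p a k : ℝ) : Prop :=
  ∀ W : Finset X,
    (∑ x ∈ W, ∑ y ∈ W, b x y) ≤
      (1 + a) * frust b θ p W +
      a * ((1 / 2) * bBoundary b W + ∑ x ∈ W, max (q x) 0 * m x) +
      k * ∑ x ∈ W, m x

/-- The energy functional `Q_{p,θ}` on finitely supported functions. -/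
def Qform (b θ : X → X → ℝ) (q m : X → ℝ) (p : ℝ) (f : X → ℂ) : ℝ :=
  (1 / 2) * ∑' x, ∑' y, b x y * ‖f x - Complex.exp ((θ x y : ℂ) * Complex.I) * f y‖ ^ p +
  ∑' x, q x * ‖f x‖ ^ p * m x

/-- The weighted vertex degree `Deg(x) = (1/m(x)) Σ_y b(x,y) + q(x)`. -/
def Degf (b : X → X → ℝ) (q m : X → ℝ) (x : X) : ℝ :=
  (1 / m x) * ∑' y, b x y + q x

/-- The pairing `⟨Deg, |f|^p⟩ = Σ_x Deg(x) |f(x)|^p m(x)`. -/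
def degPair (b : X → X → ℝ) (q m : X → ℝ) (p : ℝ) (f : X → ℂ) : ℝ :=
  ∑' x, Degf b q m x * ‖f x‖ ^ p * m x

/-- The `p`-norm to the `p`: `‖f‖_p^p = Σ_x |f(x)|^p m(x)`. -/
def pNorm (m : X → ℝ) (p : ℝ) (f : X → ℂ) : ℝ :=
  ∑' x, ‖f x‖ ^ p * m x

/-- `q ∈ K_α^{p,θ}` with constant `C`: the negative part of `q` is form bounded. -/
def InKClass (b θ : X → X → ℝ) (q m : X → ℝ) (p α C : ℝ) : Prop :=
  ∀ f : X → ℂ, (Function.support f).Finite →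
    (∑' x, max (-q x) 0 * ‖f x‖ ^ p * m x) ≤
      α * Qform b θ (fun x => max (q x) 0) m p f + C * pNorm m p f

/-! For `t > 0` let `W_t = {|f|^p > t}` and `σ = exp (i arg f)`. Testing the frustration index
of `W_t` with `σ`, and splitting `b(∂W_t)` into the edges inside `supp f` and those leaving it,
bounds the integrand by a step function of `t`. Integrating it charges each edge `(x, y)` with
`|σ x - e^{iθ} σ y| min(|f x|^p, |f y|^p) + ||f x|^p - |f y|^p|`, and this is at most
`√(p²+1) |f x - e^{iθ} f y| M` with `M = ((|f x|^p + |f y|^p)/2)^((p-1)/p)`: writing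
`a = |f x| ≥ c = |f y|`, the angular part is controlled by `c^p ≤ √(ac) M`, the radial part by
`a^p - c^p ≤ p (a - c) M` (Hermite–Hadamard for the convex `t ↦ t^(1/p - 1)`), and the two are
combined by Cauchy–Schwarz since `|a w₁ - c w₂|² = (a - c)² + ac |w₁ - w₂|²` for unit `w₁, w₂`. -/

lemma two_mul_rpow_midpoint_le {r t u : ℝ} (hr : r ≤ 0) (ht : 0 < t) (hu : 0 < u) :
    2 * ((t + u) / 2) ^ r ≤ t ^ r + u ^ r := by
  have hmid : ((t + u) / 2) ^ r ≤ (t * u) ^ (r / 2) := by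
    have hgm : t * u ≤ ((t + u) / 2) ^ (2 : ℝ) := by
      rw [Real.rpow_two]; nlinarith [sq_nonneg (t - u)]
    calc ((t + u) / 2) ^ r = (((t + u) / 2) ^ (2 : ℝ)) ^ (r / 2) := by
          rw [← Real.rpow_mul (by positivity)]; ring_nf
      _ ≤ (t * u) ^ (r / 2) := Real.rpow_le_rpow_of_nonpos (by positivity) hgm (by linarith)
  have hsq : ∀ z : ℝ, 0 < z → z ^ r = (z ^ (r / 2)) ^ 2 := fun z hz => by
    rw [← Real.rpow_natCast, ← Real.rpow_mul hz.le]; norm_num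
  rw [Real.mul_rpow ht.le hu.le] at hmid
  rw [hsq t ht, hsq u hu]
  nlinarith [sq_nonneg (t ^ (r / 2) - u ^ (r / 2))]

-- Hermite–Hadamard inequality for the convex function `t ↦ t ^ r`.
lemma mul_rpow_midpoint_le_integral_rpow {r C A : ℝ} (hr : r ≤ 0) (hr1 : -1 < r)
    (hC : 0 ≤ C) (hCA : C ≤ A) :
    (A - C) * ((A + C) / 2) ^ r ≤ ∫ t in C..A, t ^ r := by
  have hint : IntervalIntegrable (fun t : ℝ => t ^ r) volume C A :=
    intervalIntegral.intervalIntegrable_rpow' hr1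
  have hrefl : (∫ t in C..A, (A + C - t) ^ r) = ∫ t in C..A, t ^ r := by
    simpa using intervalIntegral.integral_comp_sub_left (a := C) (b := A)
      (fun t : ℝ => t ^ r) (A + C)
  have hint' : IntervalIntegrable (fun t : ℝ => (A + C - t) ^ r) volume C A := by
    simpa using (hint.comp_sub_left (A + C)).symm
  calc (A - C) * ((A + C) / 2) ^ r = ∫ _ in C..A, ((A + C) / 2) ^ r := by simp
    _ ≤ ∫ t in C..A, (t ^ r + (A + C - t) ^ r) / 2 := by
        refine intervalIntegral.integral_mono_on_of_le_Ioo hCA intervalIntegrable_const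
          ((hint.add hint').div_const 2) fun t ht => ?_
        have h := two_mul_rpow_midpoint_le hr (hC.trans_lt ht.1)
          (by linarith [ht.1, ht.2] : 0 < A + C - t)
        rw [add_sub_cancel] at h
        linarith
    _ = ∫ t in C..A, t ^ r := by
        rw [intervalIntegral.integral_div, intervalIntegral.integral_add hint hint', hrefl]
        ring

lemma rpow_sub_rpow_le {p a c : ℝ} (hp : 1 ≤ p) (hc : 0 ≤ c) (hca : c ≤ a) :
    a ^ p - c ^ p ≤ p * (a - c) * ((a ^ p + c ^ p) / 2) ^ ((p - 1) / p) := by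
  have hp0 : 0 < p := by linarith
  rcases hca.eq_or_lt with rfl | hlt
  · simp
  have hroot : ∀ z : ℝ, 0 ≤ z → (z ^ p) ^ (1 / p) = z := fun z hz => by
    rw [← Real.rpow_mul hz, mul_one_div_cancel hp0.ne', Real.rpow_one]
  have hr : -1 < 1 / p - 1 := by
    have : 0 < 1 / p := by positivity
    linarith
  have hint : ∫ t in c ^ p..a ^ p, t ^ (1 / p - 1) = p * (a - c) := by
    rw [integral_rpow (Or.inl hr), sub_add_cancel, hroot a (hc.trans hlt.le), hroot c hc]
    field_simp
  have hHermite := mul_rpow_midpoint_le_integral_rpow (r := 1 / p - 1)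
    (by rw [sub_nonpos, div_le_one hp0]; exact hp) hr
    (Real.rpow_nonneg hc p) (Real.rpow_le_rpow hc hlt.le hp0.le)
  rw [hint] at hHermite
  have hM : 0 < (a ^ p + c ^ p) / 2 := by
    have := Real.rpow_pos_of_pos (hc.trans_lt hlt) p
    have := Real.rpow_nonneg hc p
    linarith
  have hcancel :
      ((a ^ p + c ^ p) / 2) ^ (1 / p - 1) * ((a ^ p + c ^ p) / 2) ^ ((p - 1) / p) = 1 := by
    rw [← Real.rpow_add hM, show 1 / p - 1 + (p - 1) / p = 0 by field_simp; ring, Real.rpow_zero]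
  calc a ^ p - c ^ p
      = (a ^ p - c ^ p) * ((a ^ p + c ^ p) / 2) ^ (1 / p - 1) *
          ((a ^ p + c ^ p) / 2) ^ ((p - 1) / p) := by rw [mul_assoc, hcancel, mul_one]
    _ ≤ p * (a - c) * ((a ^ p + c ^ p) / 2) ^ ((p - 1) / p) :=
        mul_le_mul_of_nonneg_right hHermite (Real.rpow_nonneg hM.le _)

lemma rpow_le_sqrt_mul_mul_rpow_mean {p a c : ℝ} (hp : 1 ≤ p) (hc : 0 ≤ c) (hca : c ≤ a) :
    c ^ p ≤ Real.sqrt (a * c) * ((a ^ p + c ^ p) / 2) ^ ((p - 1) / p) := by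
  have hp0 : 0 < p := by linarith
  have hc_le : c ≤ Real.sqrt (a * c) := Real.le_sqrt_of_sq_le (by nlinarith)
  have hpow : c ^ (p - 1) ≤ ((a ^ p + c ^ p) / 2) ^ ((p - 1) / p) := by
    have hcp : c ^ p ≤ a ^ p := Real.rpow_le_rpow hc hca hp0.le
    calc c ^ (p - 1) = (c ^ p) ^ ((p - 1) / p) := by
          rw [← Real.rpow_mul hc, mul_div_cancel₀ _ hp0.ne']
      _ ≤ ((a ^ p + c ^ p) / 2) ^ ((p - 1) / p) :=
          Real.rpow_le_rpow (Real.rpow_nonneg hc p) (by linarith)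
            (div_nonneg (by linarith) hp0.le)
  calc c ^ p = c * c ^ (p - 1) := by
        rw [← Real.rpow_one_add' hc (by linarith), add_sub_cancel]
    _ ≤ Real.sqrt (a * c) * ((a ^ p + c ^ p) / 2) ^ ((p - 1) / p) :=
        mul_le_mul hc_le hpow (Real.rpow_nonneg hc _) (Real.sqrt_nonneg _)

-- Applied with `s = ‖w₁ - w₂‖` and `d = ‖a w₁ - c w₂‖`, see `norm_ofReal_mul_sub_ofReal_mul_sq`.
lemma mul_rpow_add_rpow_sub_rpow_le {p a c s d : ℝ} (hp : 1 ≤ p) (hc : 0 ≤ c) (hca : c ≤ a)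
    (hs : 0 ≤ s) (hd : 0 ≤ d) (hd2 : d ^ 2 = (a - c) ^ 2 + a * c * s ^ 2) :
    s * c ^ p + (a ^ p - c ^ p) ≤
      Real.sqrt (p ^ 2 + 1) * d * ((a ^ p + c ^ p) / 2) ^ ((p - 1) / p) := by
  have hM : 0 ≤ ((a ^ p + c ^ p) / 2) ^ ((p - 1) / p) :=
    Real.rpow_nonneg (by positivity [Real.rpow_nonneg hc p, Real.rpow_nonneg (hc.trans hca) p]) _
  have hCS : s * Real.sqrt (a * c) + p * (a - c) ≤ Real.sqrt (p ^ 2 + 1) * d := by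
    have hP2 : (s * Real.sqrt (a * c)) ^ 2 = a * c * s ^ 2 := by
      rw [mul_pow, Real.sq_sqrt (mul_nonneg (hc.trans hca) hc)]; ring
    rw [← Real.sqrt_sq hd, ← Real.sqrt_mul (by positivity)]
    apply Real.le_sqrt_of_sq_le
    rw [hd2]
    nlinarith [sq_nonneg (a - c - p * (s * Real.sqrt (a * c)))]
  calc s * c ^ p + (a ^ p - c ^ p)
      ≤ s * (Real.sqrt (a * c) * ((a ^ p + c ^ p) / 2) ^ ((p - 1) / p)) +
          p * (a - c) * ((a ^ p + c ^ p) / 2) ^ ((p - 1) / p) :=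
        add_le_add (mul_le_mul_of_nonneg_left (rpow_le_sqrt_mul_mul_rpow_mean hp hc hca) hs)
          (rpow_sub_rpow_le hp hc hca)
    _ = (s * Real.sqrt (a * c) + p * (a - c)) * ((a ^ p + c ^ p) / 2) ^ ((p - 1) / p) := by ring
    _ ≤ Real.sqrt (p ^ 2 + 1) * d * ((a ^ p + c ^ p) / 2) ^ ((p - 1) / p) :=
        mul_le_mul_of_nonneg_right hCS hM

lemma norm_ofReal_mul_sub_ofReal_mul_sq (a c : ℝ) {w₁ w₂ : ℂ} (hw₁ : ‖w₁‖ = 1)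
    (hw₂ : ‖w₂‖ = 1) :
    ‖(a : ℂ) * w₁ - c * w₂‖ ^ 2 = (a - c) ^ 2 + a * c * ‖w₁ - w₂‖ ^ 2 := by
  have hunit : ∀ w : ℂ, ‖w‖ = 1 → w.re ^ 2 + w.im ^ 2 = 1 := fun w hw => by
    have := Complex.sq_norm w
    rw [hw, Complex.normSq_apply] at this
    linarith
  simp only [Complex.sq_norm, Complex.normSq_apply, Complex.sub_re, Complex.sub_im,
    Complex.mul_re, Complex.mul_im, Complex.ofReal_re, Complex.ofReal_im]
  linear_combination (a ^ 2 - a * c) * hunit w₁ hw₁ + (c ^ 2 - a * c) * hunit w₂ hw₂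

lemma norm_sub_mul_min_rpow_add_abs_le {p a c : ℝ} (hp : 1 ≤ p) (ha : 0 ≤ a) (hc : 0 ≤ c)
    {w₁ w₂ : ℂ} (hw₁ : ‖w₁‖ = 1) (hw₂ : ‖w₂‖ = 1) :
    ‖w₁ - w₂‖ * min (a ^ p) (c ^ p) + |a ^ p - c ^ p| ≤
      Real.sqrt (p ^ 2 + 1) * ‖(a : ℂ) * w₁ - c * w₂‖ * ((a ^ p + c ^ p) / 2) ^ ((p - 1) / p) := by
  wlog hca : c ≤ a generalizing a c w₁ w₂
  · have := this hc ha hw₂ hw₁ (le_of_not_ge hca)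
    rwa [norm_sub_rev w₂, norm_sub_rev (_ * w₂), min_comm, abs_sub_comm, add_comm (c ^ p)]
      at this
  have hpow : c ^ p ≤ a ^ p := Real.rpow_le_rpow hc hca (by linarith)
  rw [min_eq_right hpow, abs_of_nonneg (sub_nonneg.2 hpow)]
  exact mul_rpow_add_rpow_sub_rpow_le hp hc hca (norm_nonneg _) (norm_nonneg _)
    (norm_ofReal_mul_sub_ofReal_mul_sq a c hw₁ hw₂)

section Graph

variable {b θ : X → X → ℝ}

lemma frust_nonneg (hb : ∀ x y, 0 ≤ b x y) (p : ℝ) (W : Finset X) : 0 ≤ frust b θ p W := by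
  refine Real.sInf_nonneg ?_
  rintro r ⟨τ, -, rfl⟩
  exact mul_nonneg (by norm_num) (Finset.sum_nonneg fun x _ => Finset.sum_nonneg fun y _ =>
    mul_nonneg (hb x y) (Real.rpow_nonneg (norm_nonneg _) p))

lemma frust_le (hb : ∀ x y, 0 ≤ b x y) {p : ℝ} {W : Finset X} {τ : X → ℂ}
    (hτ : ∀ x ∈ W, ‖τ x‖ = 1) :
    frust b θ p W ≤ (1 / 2) * ∑ x ∈ W, ∑ y ∈ W,
      b x y * ‖τ x - Complex.exp ((θ x y : ℂ) * Complex.I) * τ y‖ ^ p := by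
  refine csInf_le ⟨0, ?_⟩ ⟨τ, hτ, rfl⟩
  rintro r ⟨τ', -, rfl⟩
  exact mul_nonneg (by norm_num) (Finset.sum_nonneg fun x _ => Finset.sum_nonneg fun y _ =>
    mul_nonneg (hb x y) (Real.rpow_nonneg (norm_nonneg _) p))

lemma bBoundary_nonneg (hb : ∀ x y, 0 ≤ b x y) (W : Finset X) : 0 ≤ bBoundary b W :=
  add_nonneg (Finset.sum_nonneg fun _ _ => tsum_nonneg fun _ => hb _ _)
    (Finset.sum_nonneg fun _ _ => tsum_nonneg fun _ => hb _ _)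

lemma half_bBoundary_eq (hsymm : ∀ x y, b x y = b y x) (hsum : ∀ x, Summable (b x))
    (W : Finset X) :
    (1 / 2) * bBoundary b W = ∑ x ∈ W, ∑' y, b x y - ∑ x ∈ W, ∑ y ∈ W, b x y := by
  have hrow : ∀ x, ∑' y : {y : X // y ∉ W}, b x y = ∑' y, b x y - ∑ y ∈ W, b x y :=
    fun x => eq_sub_of_add_eq' (hsum x).sum_add_tsum_compl
  have hcol : ∀ y, ∑' x : {x : X // x ∉ W}, b x y = ∑' x : {x : X // x ∉ W}, b y x :=
    fun y => tsum_congr fun x => hsymm _ _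
  simp only [bBoundary, hcol, hrow, Finset.sum_sub_distrib]
  ring

lemma tsum_tsum_eq_of_symm {F : X → X → ℝ} (S : Finset X) (hsymm : ∀ x y, F x y = F y x)
    (hrow : ∀ x, Summable (F x)) (hvanish : ∀ x ∉ S, ∀ y ∉ S, F x y = 0) :
    ∑' x, ∑' y, F x y =
      ∑ x ∈ S, ∑ y ∈ S, F x y + 2 * ∑ x ∈ S, ∑' y : ↥((S : Set X)ᶜ), F x y := by
  have hout : ∀ x : ↥((S : Set X)ᶜ), ∑' y, F x y = ∑ y ∈ S, F y x := fun x => by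
    rw [tsum_eq_sum fun y hy => hvanish x x.2 y hy]
    exact Finset.sum_congr rfl fun y _ => hsymm _ _
  have hcol : ∀ y, Summable fun x : ↥((S : Set X)ᶜ) => F y x := fun y => (hrow y).subtype _
  have hsummable : Summable fun x => ∑' y, F x y := by
    rw [← S.finite_toSet.summable_compl_iff]
    simpa only [Function.comp_def, hout] using summable_sum fun y _ => hcol y
  rw [← hsummable.sum_add_tsum_compl (s := S)]
  simp only [hout, ← (hrow _).sum_add_tsum_compl (s := S), Finset.sum_add_distrib]
  rw [Summable.tsum_finsetSum fun y _ => hcol y]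
  ring

end Graph

lemma integrableOn_Ioi_ite_lt (a c : ℝ) :
    IntegrableOn (fun t : ℝ => if t < a then c else 0) (Set.Ioi 0) := by
  have : (fun t : ℝ => if t < a then c else 0) = (Set.Iio a).indicator fun _ => c := by
    ext t; simp [Set.indicator_apply]
  rw [this, IntegrableOn, integrable_indicator_iff measurableSet_Iio]
  refine (integrableOn_const_iff).2 (Or.inr ?_)
  rw [Measure.restrict_apply measurableSet_Iio, Set.Iio_inter_Ioi]
  exact measure_Ioo_lt_top

lemma integral_Ioi_ite_lt {a : ℝ} (ha : 0 ≤ a) (c : ℝ) :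
    ∫ t in Set.Ioi 0, (if t < a then c else 0) = a * c := by
  have : (fun t : ℝ => if t < a then c else 0) = (Set.Iio a).indicator fun _ => c := by
    ext t; simp [Set.indicator_apply]
  rw [this, integral_indicator_const c measurableSet_Iio, Measure.real,
    Measure.restrict_apply measurableSet_Iio, Set.Iio_inter_Ioi, Real.volume_Ioo, sub_zero,
    ENNReal.toReal_ofReal ha, smul_eq_mul]

section LevelSets

variable {b θ : X → X → ℝ}

lemma frust_add_half_bBoundary_filter_le (hb : ∀ x y, 0 ≤ b x y)
    (hsymm : ∀ x y, b x y = b y x) (hsum : ∀ x, Summable (b x)) (S : Finset X) (A : X → ℝ)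
    {τ : X → ℂ} (hτ : ∀ x, ‖τ x‖ = 1) (t : ℝ) :
    frust b θ 1 (S.filter (t < A ·)) + (1 / 2) * bBoundary b (S.filter (t < A ·)) ≤
      ∑ x ∈ S, ∑ y ∈ S, (if t < min (A x) (A y) then
          b x y * ‖τ x - Complex.exp ((θ x y : ℂ) * Complex.I) * τ y‖ / 2 - b x y else 0) +
        ∑ x ∈ S, (if t < A x then ∑' y, b x y else 0) := by
  set W := S.filter (t < A ·)
  have hfrust := frust_le (θ := θ) (p := 1) (W := W) hb fun x _ => hτ x
  have hpairs : ∀ g : X → X → ℝ,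
      ∑ x ∈ S, ∑ y ∈ S, (if t < min (A x) (A y) then g x y else 0) = ∑ x ∈ W, ∑ y ∈ W, g x y := by
    intro g
    rw [Finset.sum_filter]
    refine Finset.sum_congr rfl fun x _ => ?_
    rw [Finset.sum_filter]
    split_ifs with hx
    · exact Finset.sum_congr rfl fun y _ => by simp only [lt_min_iff, hx, true_and]
    · exact Finset.sum_eq_zero fun y _ => by simp only [lt_min_iff, hx, false_and, if_false]
  rw [hpairs, ← Finset.sum_filter, half_bBoundary_eq hsymm hsum W]
  simp only [Real.rpow_one, Finset.sum_sub_distrib, ← Finset.sum_div] at hfrust ⊢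
  linarith

lemma integral_frust_add_half_bBoundary_le (hb : ∀ x y, 0 ≤ b x y)
    (hsymm : ∀ x y, b x y = b y x) (hsum : ∀ x, Summable (b x)) (S : Finset X) {A : X → ℝ}
    (hA : ∀ x, 0 ≤ A x) {τ : X → ℂ} (hτ : ∀ x, ‖τ x‖ = 1) :
    ∫ t in Set.Ioi 0,
        (frust b θ 1 (S.filter (t < A ·)) + (1 / 2) * bBoundary b (S.filter (t < A ·))) ≤
      ∑ x ∈ S, ∑ y ∈ S, min (A x) (A y) *
          (b x y * ‖τ x - Complex.exp ((θ x y : ℂ) * Complex.I) * τ y‖ / 2 - b x y) +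
        ∑ x ∈ S, A x * ∑' y, b x y := by
  have hpairs : Integrable (fun t => ∑ x ∈ S, ∑ y ∈ S, (if t < min (A x) (A y) then
      b x y * ‖τ x - Complex.exp ((θ x y : ℂ) * Complex.I) * τ y‖ / 2 - b x y else 0))
      (volume.restrict (Set.Ioi 0)) :=
    integrable_finsetSum _ fun x _ =>
      integrable_finsetSum _ fun y _ => integrableOn_Ioi_ite_lt _ _
  have hsingles : Integrable (fun t => ∑ x ∈ S, (if t < A x then ∑' y, b x y else 0))
      (volume.restrict (Set.Ioi 0)) :=
    integrable_finsetSum _ fun x _ => integrableOn_Ioi_ite_lt _ _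
  refine (integral_mono_of_nonneg (Filter.Eventually.of_forall fun t => ?_) (hpairs.add hsingles)
    (Filter.Eventually.of_forall fun t =>
      frust_add_half_bBoundary_filter_le hb hsymm hsum S A hτ t)).trans_eq ?_
  · exact add_nonneg (frust_nonneg hb 1 _) (mul_nonneg (by norm_num) (bBoundary_nonneg hb _))
  · simp only [Pi.add_apply]
    rw [integral_add hpairs hsingles, integral_finsetSum _ fun x _ =>
      integrable_finsetSum _ fun y _ => integrableOn_Ioi_ite_lt _ _,
      integral_finsetSum _ fun x _ => integrableOn_Ioi_ite_lt _ _]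
    simp only [integral_finsetSum _ fun y _ => integrableOn_Ioi_ite_lt _ _,
      integral_Ioi_ite_lt (le_min (hA _) (hA _)), integral_Ioi_ite_lt (hA _)]

lemma sum_sum_min_mul_add_sum_mul_tsum_eq (hsymm : ∀ x y, b x y = b y x)
    (hsum : ∀ x, Summable (b x)) (S : Finset X) (A : X → ℝ) (s : X → X → ℝ) :
    ∑ x ∈ S, ∑ y ∈ S, min (A x) (A y) * (b x y * s x y / 2 - b x y) +
        ∑ x ∈ S, A x * ∑' y, b x y =
      ∑ x ∈ S, ∑ y ∈ S, b x y * (s x y * min (A x) (A y) + |A x - A y|) / 2 +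
        ∑ x ∈ S, ∑' y : ↥((S : Set X)ᶜ), b x y * A x := by
  have hsplit : ∀ x, A x * ∑' y, b x y =
      ∑ y ∈ S, b x y * A x + ∑' y : ↥((S : Set X)ᶜ), b x y * A x := fun x => by
    rw [tsum_mul_right, ← Finset.sum_mul, ← add_mul, (hsum x).sum_add_tsum_compl, mul_comm]
  have hswap : ∑ x ∈ S, ∑ y ∈ S, b x y * A y = ∑ x ∈ S, ∑ y ∈ S, b x y * A x := by
    rw [Finset.sum_comm]
    exact Finset.sum_congr rfl fun x _ => Finset.sum_congr rfl fun y _ => by rw [hsymm]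
  have hsymmetrize : ∑ x ∈ S, ∑ y ∈ S, min (A x) (A y) * (b x y * s x y / 2 - b x y) +
      ∑ x ∈ S, ∑ y ∈ S, b x y * A x = ∑ x ∈ S, ∑ y ∈ S,
        (min (A x) (A y) * (b x y * s x y / 2 - b x y) + (b x y * A x + b x y * A y) / 2) := by
    simp only [add_div, Finset.sum_add_distrib, ← Finset.sum_div, hswap]
    ring
  have habs : ∀ x y, |A x - A y| = A x + A y - 2 * min (A x) (A y) := fun x y => by
    rw [← max_sub_min_eq_abs', ← min_add_max (A x) (A y)]; ring
  simp only [hsplit, Finset.sum_add_distrib]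
  rw [← add_assoc, hsymmetrize]
  congr 1
  exact Finset.sum_congr rfl fun x _ => Finset.sum_congr rfl fun y _ => by rw [habs]; ring

end LevelSets

lemma summable_mul_of_eventually_eq_const {u g : X → ℝ} (hu : Summable u) {c : ℝ}
    (hg : ∀ᶠ y in Filter.cofinite, g y = c) : Summable fun y => u y * g y :=
  (summable_congr_cofinite (hg.mono fun y hy => by rw [hy])).mp (hu.mul_right c)

lemma norm_sub_exp_mul_I_mul_comm {α β : ℝ} (hαβ : ∃ k : ℤ, α + β = 2 * Real.pi * k) (u v : ℂ) :
    ‖v - Complex.exp (β * Complex.I) * u‖ = ‖u - Complex.exp (α * Complex.I) * v‖ := by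
  have hinv : Complex.exp (α * Complex.I) * Complex.exp (β * Complex.I) = 1 := by
    obtain ⟨k, hk⟩ := hαβ
    rw [← Complex.exp_add, Complex.exp_eq_one_iff]
    exact ⟨k, by rw [← add_mul, ← Complex.ofReal_add, hk]; push_cast; ring⟩
  calc ‖v - Complex.exp (β * Complex.I) * u‖
      = ‖Complex.exp (α * Complex.I) * (v - Complex.exp (β * Complex.I) * u)‖ := by
        rw [norm_mul, Complex.norm_exp_ofReal_mul_I, one_mul]
    _ = ‖u - Complex.exp (α * Complex.I) * v‖ := by
        rw [mul_sub, ← mul_assoc, hinv, one_mul, norm_sub_rev]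

lemma norm_exp_arg_sub_mul_min_add_abs_le {p : ℝ} (hp : 1 ≤ p) (u v e : ℂ) (he : ‖e‖ = 1) :
    ‖Complex.exp (u.arg * Complex.I) - e * Complex.exp (v.arg * Complex.I)‖ *
        min (‖u‖ ^ p) (‖v‖ ^ p) + |‖u‖ ^ p - ‖v‖ ^ p| ≤
      Real.sqrt (p ^ 2 + 1) * ‖u - e * v‖ * ((‖u‖ ^ p + ‖v‖ ^ p) / 2) ^ ((p - 1) / p) := by
  have h := norm_sub_mul_min_rpow_add_abs_le hp (norm_nonneg u) (norm_nonneg v)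
    (Complex.norm_exp_ofReal_mul_I u.arg)
    (by rw [norm_mul, he, Complex.norm_exp_ofReal_mul_I, one_mul] :
      ‖e * Complex.exp (v.arg * Complex.I)‖ = 1)
  rwa [Complex.norm_mul_exp_arg_mul_I, mul_left_comm, Complex.norm_mul_exp_arg_mul_I] at h

def coareaTerm (b θ : X → X → ℝ) (p : ℝ) (f : X → ℂ) (x y : X) : ℝ :=
  b x y * ‖f x - Complex.exp ((θ x y : ℂ) * Complex.I) * f y‖ *
    ((‖f x‖ ^ p + ‖f y‖ ^ p) / 2) ^ ((p - 1) / p)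

section CoareaTerm

variable {b θ : X → X → ℝ} {p : ℝ} {f : X → ℂ}

lemma coareaTerm_comm (hsymm : ∀ x y, b x y = b y x)
    (hθ : ∀ x y, ∃ k : ℤ, θ x y + θ y x = 2 * Real.pi * k) (x y : X) :
    coareaTerm b θ p f x y = coareaTerm b θ p f y x := by
  simp only [coareaTerm, hsymm x y, norm_sub_exp_mul_I_mul_comm (hθ y x), add_comm (‖f x‖ ^ p)]

lemma coareaTerm_eq_zero {x y : X} (hx : f x = 0) (hy : f y = 0) :
    coareaTerm b θ p f x y = 0 := by
  simp [coareaTerm, hx, hy]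

lemma summable_coareaTerm (hsum : ∀ x, Summable (b x)) (hf : (Function.support f).Finite)
    (x : X) : Summable (coareaTerm b θ p f x) := by
  refine (summable_mul_of_eventually_eq_const (hsum x)
    (c := ‖f x‖ * ((‖f x‖ ^ p + ‖(0 : ℂ)‖ ^ p) / 2) ^ ((p - 1) / p)) ?_).congr
    fun y => (mul_assoc _ _ _).symm
  filter_upwards [hf.eventually_cofinite_notMem] with y hy
  rw [Function.notMem_support.1 hy, mul_zero, sub_zero]

lemma edge_le_coareaTerm (hb : ∀ x y, 0 ≤ b x y) (hp : 1 ≤ p) (x y : X) :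
    b x y * (‖Complex.exp ((f x).arg * Complex.I) - Complex.exp ((θ x y : ℂ) * Complex.I) *
        Complex.exp ((f y).arg * Complex.I)‖ * min (‖f x‖ ^ p) (‖f y‖ ^ p) +
        |‖f x‖ ^ p - ‖f y‖ ^ p|) / 2 ≤
      Real.sqrt (p ^ 2 + 1) / 2 * coareaTerm b θ p f x y := by
  have := mul_le_mul_of_nonneg_left (norm_exp_arg_sub_mul_min_add_abs_le hp (f x) (f y) _
    (Complex.norm_exp_ofReal_mul_I (θ x y))) (hb x y)
  rw [coareaTerm]
  linarith

lemma boundaryEdge_le_coareaTerm (hb : ∀ x y, 0 ≤ b x y) (hp : 1 ≤ p) (x : X) {y : X}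
    (hy : f y = 0) : b x y * ‖f x‖ ^ p ≤ Real.sqrt (p ^ 2 + 1) * coareaTerm b θ p f x y := by
  have := edge_le_coareaTerm (θ := θ) (f := f) hb hp x y
  rw [hy, norm_zero, Real.zero_rpow (by linarith), min_eq_right (by positivity), sub_zero,
    abs_of_nonneg (by positivity)] at this
  linarith

end CoareaTerm

theorem magnetic_coarea_general
    (b θ : X → X → ℝ) (m : X → ℝ) (hG : IsMagneticGraph b θ m)
    (p : ℝ) (hp : 1 ≤ p)
    (f : X → ℂ) (hf : (Function.support f).Finite) :
    (∫ t in Set.Ioi (0 : ℝ),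
        (frust b θ 1 (hf.toFinset.filter (fun x => t < ‖f x‖ ^ p)) +
          (1 / 2) * bBoundary b (hf.toFinset.filter (fun x => t < ‖f x‖ ^ p)))) ≤
      (Real.sqrt (p ^ 2 + 1) / 2) *
        ∑' x, ∑' y, b x y * ‖f x - Complex.exp ((θ x y : ℂ) * Complex.I) * f y‖ *
          ((‖f x‖ ^ p + ‖f y‖ ^ p) / 2) ^ ((p - 1) / p) := by
  obtain ⟨hb, hsymm, -, hsum, hθ, -⟩ := hG
  set S := hf.toFinset
  have hS : ∀ y ∉ S, f y = 0 := fun y hy => by simpa [S] using hy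
  have hrow := summable_coareaTerm (θ := θ) (p := p) hsum hf
  calc _ ≤ _ := integral_frust_add_half_bBoundary_le hb hsymm hsum S
        (fun x => Real.rpow_nonneg (norm_nonneg (f x)) p)
        (fun x => Complex.norm_exp_ofReal_mul_I (f x).arg)
    _ = _ := sum_sum_min_mul_add_sum_mul_tsum_eq hsymm hsum S _ _
    _ ≤ ∑ x ∈ S, ∑ y ∈ S, Real.sqrt (p ^ 2 + 1) / 2 * coareaTerm b θ p f x y +
          ∑ x ∈ S, ∑' y : ↥((S : Set X)ᶜ), Real.sqrt (p ^ 2 + 1) * coareaTerm b θ p f x y :=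
        add_le_add (Finset.sum_le_sum fun x _ => Finset.sum_le_sum fun y _ =>
            edge_le_coareaTerm hb hp x y)
          (Finset.sum_le_sum fun x _ => ((hsum x).subtype _).mul_right _ |>.tsum_le_tsum
            (fun y => boundaryEdge_le_coareaTerm hb hp x (hS y y.2))
            (((hrow x).subtype _).mul_left _))
    _ = Real.sqrt (p ^ 2 + 1) / 2 * ∑' x, ∑' y, coareaTerm b θ p f x y := by
        rw [tsum_tsum_eq_of_symm S (coareaTerm_comm hsymm hθ) hrow
            fun x hx y hy => coareaTerm_eq_zero (hS x hx) (hS y hy),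
          mul_add, ← mul_assoc, div_mul_cancel₀ _ two_ne_zero]
        simp only [Finset.mul_sum, tsum_mul_left]

/-- the magnetic co-area inequality. For finitely supported `f` and `p ≥ 1`,
`∫₀^∞ (ι_{1,θ}(Ω_t(|f|^p)) + ½ b(∂Ω_t(|f|^p))) dt` is bounded by
`(√(p²+1)/2) Σ_{x,y} b(x,y)|f(x) − e^{iθ(x,y)}f(y)| ((|f(x)|^p+|f(y)|^p)/2)^{(p−1)/p}`. -/
theorem magnetic_coarea [Countable X]
    (b θ : X → X → ℝ) (q m : X → ℝ) (hG : IsMagneticGraph b θ m)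
    (p : ℝ) (hp : 1 ≤ p)
    (f : X → ℂ) (hf : (Function.support f).Finite) :
    (∫ t in Set.Ioi (0 : ℝ),
        (frust b θ 1 (hf.toFinset.filter (fun x => t < ‖f x‖ ^ p)) +
          (1 / 2) * bBoundary b (hf.toFinset.filter (fun x => t < ‖f x‖ ^ p)))) ≤
      (Real.sqrt (p ^ 2 + 1) / 2) *
        ∑' x, ∑' y, b x y * ‖f x - Complex.exp ((θ x y : ℂ) * Complex.I) * f y‖ *
          ((‖f x‖ ^ p + ‖f y‖ ^ p) / 2) ^ ((p - 1) / p) :=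
  magnetic_coarea_general b θ m hG p hp f hf
end
end

section
/- Let C = (b,θ,0,m) be a magnetic cycle of length n over a finite set Y with standard edge weights, and let W ⊆ Y. Let F ∈ ℝ be a representative of the flux F_θ(C) and δ = min_{k∈ℤ} |F − 2kπ|. Then ι_{2,θ}(W) = n·|1 − e^{iδ/n}|² if W = Y, and ι_{2,θ}(W) = 0 if W ≠ Y. -/
open Complex MeasureTheory
open scoped Classical

noncomputable section

variable {X : Type*}

/-!
Write a unimodular `τ` as `x_l ↦ exp (i s_l)`. On the whole cycle the energy becomes
`∑ l, 2 (1 - cos β_l)` with edge phases `β_l = θ(x_l, x_{l+1}) + s_{l+1} - s_l` summing to the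
flux, and conversely every family of phases with that sum comes from a gauge `s`. So `ι_{2,θ}(Y)`
is `2n (1 - cos (δ / n))` once `∑ cos β_l ≤ n cos (δ / n)` whenever `∑ β_l ≡ F (mod 2π)`. Replacing
each `β_l` by its distance `d_l ∈ [0, π]` to `2πℤ`, shrinking the `d_l` until they sum to `δ ≤ π`,
and averaging the only angle above `π / 2` (if any) with another one, this becomes Jensen's
inequality for `cos` on `[0, π / 2]`. If `W ≠ Y`, then `W` misses a vertex and so lies on a path,
on which `θ` is a pure gauge and the frustration vanishes.

The distance from `x` to `2πℤ` is `‖(x : AddCircle (2 * π))‖`.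
-/

open scoped Real

namespace AddCircle

lemma coe_add_two_pi_mul_intCast (x : ℝ) (k : ℤ) :
    ((x + 2 * π * k : ℝ) : AddCircle (2 * π)) = x := by
  rw [coe_add, add_eq_left, coe_eq_zero_iff]
  exact ⟨k, by rw [zsmul_eq_mul]; ring⟩

lemma norm_coe_le_abs_sub_two_pi_mul_intCast (x : ℝ) (k : ℤ) :
    ‖(x : AddCircle (2 * π))‖ ≤ |x - 2 * π * k| := by
  calc ‖(x : AddCircle (2 * π))‖ = ‖((x - 2 * π * k + 2 * π * k : ℝ) : AddCircle (2 * π))‖ := by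
        rw [sub_add_cancel]
    _ ≤ |x - 2 * π * k| := by
        rw [coe_add_two_pi_mul_intCast]; exact QuotientAddGroup.norm_mk_le_norm

lemma isLeast_abs_sub_two_pi_mul_intCast (x : ℝ) :
    IsLeast {d : ℝ | ∃ k : ℤ, d = |x - 2 * π * k|} ‖(x : AddCircle (2 * π))‖ := by
  refine ⟨⟨round ((2 * π)⁻¹ * x), ?_⟩, ?_⟩
  · rw [norm_eq, mul_comm _ (2 * π)]
  · rintro d ⟨k, rfl⟩
    exact norm_coe_le_abs_sub_two_pi_mul_intCast x k

lemma cos_norm_coe (x : ℝ) : Real.cos ‖(x : AddCircle (2 * π))‖ = Real.cos x := by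
  rw [norm_eq, Real.cos_abs, Real.cos_sub_int_mul_two_pi]

lemma norm_coe_le_pi (x : ℝ) : ‖(x : AddCircle (2 * π))‖ ≤ π := by
  have := norm_le_half_period (2 * π) (x := x) Real.two_pi_pos.ne'
  rwa [abs_of_pos Real.two_pi_pos, mul_div_cancel_left₀ _ two_ne_zero] at this

end AddCircle

namespace Real

lemma cos_add_cos_le_two_mul_cos_half {a b : ℝ} (ha : 0 ≤ a) (hb : 0 ≤ b) (hab : a + b ≤ π) :
    cos a + cos b ≤ 2 * cos ((a + b) / 2) := by
  have hc : 0 ≤ cos ((a + b) / 2) :=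
    cos_nonneg_of_mem_Icc ⟨by linarith [pi_pos], by linarith⟩
  rw [cos_add_cos]
  nlinarith [cos_le_one ((a - b) / 2)]

lemma sum_cos_le_card_mul_cos_average_of_le_pi_div_two {ι : Type*} [Fintype ι] {d : ι → ℝ}
    (hd0 : ∀ i, 0 ≤ d i) (hd : ∀ i, d i ≤ π / 2) :
    ∑ i, cos (d i) ≤ Fintype.card ι * cos ((∑ i, d i) / Fintype.card ι) := by
  rcases isEmpty_or_nonempty ι with hι | hι
  · simp
  have hcard : (0 : ℝ) < Fintype.card ι := by exact_mod_cast Fintype.card_pos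
  have hJ := strictConcaveOn_cos_Icc.concaveOn.le_map_sum (t := Finset.univ)
    (w := fun _ => (Fintype.card ι : ℝ)⁻¹) (p := d) (fun _ _ => by positivity)
    (by simp [Finset.card_univ, hcard.ne'])
    (fun i _ => ⟨by linarith [hd0 i, pi_pos], hd i⟩)
  simp only [smul_eq_mul, ← Finset.mul_sum] at hJ
  rw [inv_mul_eq_div, div_le_iff₀' hcard] at hJ
  rwa [div_eq_inv_mul]

/-- The smoothing step `(d i, d (σ i)) ↦ their mean` only raises `∑ cos`, and afterwards every
angle lies in `[0, π/2]`, where Jensen's inequality applies. -/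
lemma sum_cos_le_card_mul_cos_average_of_perm {ι : Type*} [Fintype ι] {d : ι → ℝ}
    (σ : Equiv.Perm ι) (hd0 : ∀ i, 0 ≤ d i) (hσ : ∀ i, d i + d (σ i) ≤ π) :
    ∑ i, cos (d i) ≤ Fintype.card ι * cos ((∑ i, d i) / Fintype.card ι) := by
  set e : ι → ℝ := fun i => (d i + d (σ i)) / 2
  have hsum : ∑ i, e i = ∑ i, d i := by
    simp only [e, ← Finset.sum_div, Finset.sum_add_distrib, Equiv.sum_comp σ d]
    ring
  calc ∑ i, cos (d i) = (∑ i, (cos (d i) + cos (d (σ i)))) / 2 := by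
        rw [Finset.sum_add_distrib, Equiv.sum_comp σ (fun i => cos (d i))]; ring
    _ ≤ (∑ i, 2 * cos (e i)) / 2 := by
        gcongr with i
        exact cos_add_cos_le_two_mul_cos_half (hd0 i) (hd0 (σ i)) (hσ i)
    _ = ∑ i, cos (e i) := by rw [← Finset.mul_sum]; ring
    _ ≤ Fintype.card ι * cos ((∑ i, e i) / Fintype.card ι) :=
        sum_cos_le_card_mul_cos_average_of_le_pi_div_two
          (fun i => by have := hd0 i; have := hd0 (σ i); positivity)
          (fun i => by simp only [e]; linarith [hσ i])
    _ = Fintype.card ι * cos ((∑ i, d i) / Fintype.card ι) := by rw [hsum]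

lemma sum_cos_le_card_mul_cos_average {ι : Type*} [Fintype ι] {d : ι → ℝ}
    (hd0 : ∀ i, 0 ≤ d i) (hsum : ∑ i, d i ≤ π) :
    ∑ i, cos (d i) ≤ Fintype.card ι * cos ((∑ i, d i) / Fintype.card ι) := by
  have hpair : ∀ i j, i ≠ j → d i + d j ≤ π := fun i j hij =>
    le_trans (by rw [Finset.sum_pair hij])
      (le_trans (Finset.sum_le_sum_of_subset_of_nonneg (Finset.subset_univ {i, j})
        (fun k _ _ => hd0 k)) hsum)
  by_cases hsmall : ∀ i, d i ≤ π / 2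
  · exact sum_cos_le_card_mul_cos_average_of_le_pi_div_two hd0 hsmall
  obtain ⟨j, hj⟩ := not_forall.mp hsmall
  rcases subsingleton_or_nontrivial ι with hι | hι
  · have : Unique ι := uniqueOfSubsingleton j
    simp
  obtain ⟨k, hkj⟩ := exists_ne j
  refine sum_cos_le_card_mul_cos_average_of_perm (Equiv.swap j k) hd0 fun i => ?_
  have hother : ∀ i, i ≠ j → d i ≤ π / 2 := fun i hi => by linarith [hpair i j hi, not_le.mp hj]
  rcases eq_or_ne i j with rfl | hij
  · simpa using hpair i k hkj.symm
  rcases eq_or_ne i k with rfl | hik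
  · simpa [add_comm] using hpair i j hij
  · rw [Equiv.swap_apply_of_ne_of_ne hij hik]; linarith [hother i hij]

/-- Shrinking all angles by the common factor `δ / ∑ d` reduces to the case `∑ d = δ ≤ π`; this can
only raise `∑ cos`, since `cos` is antitone on `[0, π]`. -/
lemma sum_cos_le_card_mul_cos_div_of_le_sum {ι : Type*} [Fintype ι] {d : ι → ℝ} {δ : ℝ}
    (hd : ∀ i, d i ∈ Set.Icc 0 π) (hδ0 : 0 ≤ δ) (hδπ : δ ≤ π) (hδ : δ ≤ ∑ i, d i) :
    ∑ i, cos (d i) ≤ Fintype.card ι * cos (δ / Fintype.card ι) := by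
  set c := δ / ∑ i, d i
  have hc0 : 0 ≤ c := div_nonneg hδ0 (hδ0.trans hδ)
  have hc1 : c ≤ 1 := div_le_one_of_le₀ hδ (hδ0.trans hδ)
  have hsum : ∑ i, c * d i = δ := by
    rw [← Finset.mul_sum]
    exact div_mul_cancel_of_imp fun h => le_antisymm (h ▸ hδ) hδ0
  calc ∑ i, cos (d i) ≤ ∑ i, cos (c * d i) := Finset.sum_le_sum fun i _ =>
        cos_le_cos_of_nonneg_of_le_pi (mul_nonneg hc0 (hd i).1) (hd i).2
          (mul_le_of_le_one_left (hd i).1 hc1)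
    _ ≤ Fintype.card ι * cos ((∑ i, c * d i) / Fintype.card ι) :=
        sum_cos_le_card_mul_cos_average (fun i => mul_nonneg hc0 (hd i).1) (hsum.trans_le hδπ)
    _ = Fintype.card ι * cos (δ / Fintype.card ι) := by rw [hsum]

lemma sum_cos_le_card_mul_cos_norm_sum_div {ι : Type*} [Fintype ι] (β : ι → ℝ) :
    ∑ i, cos (β i) ≤
      Fintype.card ι * cos (‖((∑ i, β i : ℝ) : AddCircle (2 * π))‖ / Fintype.card ι) := by
  simp only [← AddCircle.cos_norm_coe (β _)]
  refine sum_cos_le_card_mul_cos_div_of_le_sum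
    (fun i => ⟨norm_nonneg _, AddCircle.norm_coe_le_pi _⟩) (norm_nonneg _)
    (AddCircle.norm_coe_le_pi _) ?_
  rw [QuotientAddGroup.mk_sum]
  exact norm_sum_le _ _

end Real

namespace Complex

lemma norm_one_sub_exp_ofReal_mul_I_sq (x : ℝ) :
    ‖1 - exp (x * I)‖ ^ 2 = 2 * (1 - Real.cos x) := by
  rw [norm_sub_rev, norm_sub_one_sq_eq_of_norm_eq_one (norm_exp_ofReal_mul_I x),
    exp_ofReal_mul_I_re]

lemma norm_exp_sub_exp_mul_exp_sq (a θ b : ℝ) :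
    ‖exp (a * I) - exp (θ * I) * exp (b * I)‖ ^ 2 = 2 * (1 - Real.cos (θ + b - a)) := by
  have h : exp (a * I) - exp (θ * I) * exp (b * I) =
      exp (a * I) * (1 - exp ((θ + b - a : ℝ) * I)) := by
    rw [mul_sub, mul_one, ← exp_add, ← exp_add]
    push_cast
    ring_nf
  rw [h, norm_mul, norm_exp_ofReal_mul_I, one_mul, norm_one_sub_exp_ofReal_mul_I_sq]

lemma norm_sub_exp_mul_comm {θ₁ θ₂ : ℝ} (h : ∃ k : ℤ, θ₁ + θ₂ = 2 * π * k) (u v : ℂ) :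
    ‖u - exp (θ₁ * I) * v‖ = ‖v - exp (θ₂ * I) * u‖ := by
  obtain ⟨k, hk⟩ := h
  have h1 : exp (θ₂ * I) * exp (θ₁ * I) = 1 := by
    rw [← exp_add, ← exp_int_mul_two_pi_mul_I k, ← add_mul, ← ofReal_add, add_comm, hk]
    push_cast
    ring_nf
  calc ‖u - exp (θ₁ * I) * v‖ = ‖exp (θ₂ * I) * (u - exp (θ₁ * I) * v)‖ := by
        rw [norm_mul, norm_exp_ofReal_mul_I, one_mul]
    _ = ‖v - exp (θ₂ * I) * u‖ := by
        rw [mul_sub, ← mul_assoc, h1, one_mul, norm_sub_rev]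

end Complex

namespace ZMod

variable {n : ℕ} [NeZero n]

lemma val_add_one_of_add_one_ne_zero {l : ZMod n} (h : l + 1 ≠ 0) : (l + 1).val = l.val + 1 := by
  have hcast : l + 1 = ((l.val + 1 : ℕ) : ZMod n) := by push_cast; rw [natCast_zmod_val]
  have hlt : l.val + 1 < n := by
    refine lt_of_le_of_ne (val_lt l) fun heq => h ?_
    rw [hcast, heq, natCast_self]
  rw [hcast, val_cast_of_lt hlt]

/-- The witness sums `γ` along the path `a, a + 1, …, a - 1`. -/
lemma exists_add_one_eq_add_of_ne {M : Type*} [AddCommMonoid M] (γ : ZMod n → M) (a : ZMod n) :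
    ∃ s : ZMod n → M, ∀ l, l + 1 ≠ a → s (l + 1) = s l + γ l := by
  refine ⟨fun l => ∑ j ∈ Finset.range (l - a).val, γ (a + j), fun l hl => ?_⟩
  have hne : l - a + 1 ≠ 0 := by rwa [sub_add_eq_add_sub, sub_ne_zero]
  simp only
  rw [show l + 1 - a = l - a + 1 by ring, val_add_one_of_add_one_ne_zero hne,
    Finset.sum_range_succ, natCast_zmod_val, add_sub_cancel]

/-- The one edge missed by the path potential of `exists_add_one_eq_add_of_ne` is fixed by
telescoping. -/
lemma exists_add_sub_eq_of_sum_eq {θ β : ZMod n → ℝ} (h : ∑ l, β l = ∑ l, θ l) :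
    ∃ s : ZMod n → ℝ, ∀ l, θ l + s (l + 1) - s l = β l := by
  obtain ⟨s, hs⟩ := exists_add_one_eq_add_of_ne (β - θ) 0
  refine ⟨s, fun l => ?_⟩
  by_cases hl : l + 1 = 0
  · have hshift : ∑ j, s (j + 1) = ∑ j, s j := Equiv.sum_comp (Equiv.addRight 1) s
    have htel : ∑ j, (θ j + s (j + 1) - s j - β j) = 0 := by
      simp only [Finset.sum_sub_distrib, Finset.sum_add_distrib, hshift, h]
      ring
    rw [Finset.sum_eq_single_of_mem l (Finset.mem_univ l) fun j _ hj => ?_] at htel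
    · linarith
    · rw [hs j fun hj0 => hj (add_right_cancel (hj0.trans hl.symm))]
      simp only [Pi.sub_apply]
      ring
  · rw [hs l hl, Pi.sub_apply]
    ring

lemma sum_sum_ite_sub_eq_one_or_neg_one {M : Type*} [AddCommMonoid M] (hn : 3 ≤ n)
    (f : ZMod n → ZMod n → M) :
    ∑ j, ∑ l, (if j - l = 1 ∨ j - l = -1 then f j l else 0) = ∑ l, (f l (l + 1) + f (l + 1) l) := by
  have htwo : (2 : ZMod n) ≠ 0 := by
    rw [← Nat.cast_two, Ne, natCast_eq_zero_iff]
    exact fun h => by have := Nat.le_of_dvd two_pos h; omega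
  have hne : ∀ j : ZMod n, j - 1 ≠ j + 1 := fun j h =>
    htwo (by linear_combination -h)
  have hinner : ∀ j, ∑ l, (if j - l = 1 ∨ j - l = -1 then f j l else 0) =
      f j (j - 1) + f j (j + 1) := by
    intro j
    rw [← Finset.sum_filter, ← Finset.sum_pair (hne j)]
    congr 1
    ext l
    simp only [Finset.mem_filter, Finset.mem_univ, true_and, Finset.mem_insert,
      Finset.mem_singleton]
    grind
  simp only [hinner, Finset.sum_add_distrib]
  rw [add_comm, ← Equiv.sum_comp (Equiv.addRight (1 : ZMod n)) (fun j => f j (j - 1))]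
  simp only [Equiv.coe_addRight, add_sub_cancel_right]

lemma card_mul_one_sub_cos_le_sum (θ s : ZMod n → ℝ) :
    n * (1 - Real.cos (‖((∑ l, θ l : ℝ) : AddCircle (2 * π))‖ / n)) ≤
      ∑ l, (1 - Real.cos (θ l + s (l + 1) - s l)) := by
  have hshift : ∑ l, s (l + 1) = ∑ l, s l := Equiv.sum_comp (Equiv.addRight 1) s
  have htel : ∑ l, (θ l + s (l + 1) - s l) = ∑ l, θ l := by
    rw [Finset.sum_sub_distrib, Finset.sum_add_distrib, hshift, add_sub_cancel_right]
  have hJ := Real.sum_cos_le_card_mul_cos_norm_sum_div fun l => θ l + s (l + 1) - s l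
  rw [htel, ZMod.card] at hJ
  rw [Finset.sum_sub_distrib, Finset.sum_const, Finset.card_univ, ZMod.card, nsmul_eq_mul, mul_one]
  linarith

/-- The extremal gauge spreads the representative of `∑ l, θ l` modulo `2π` of least absolute
value evenly over the edges. -/
lemma exists_cos_add_sub_eq (θ : ZMod n → ℝ) :
    ∃ s : ZMod n → ℝ, ∀ l,
      Real.cos (θ l + s (l + 1) - s l) = Real.cos (‖((∑ l, θ l : ℝ) : AddCircle (2 * π))‖ / n) := by
  obtain ⟨k, hk⟩ := (AddCircle.isLeast_abs_sub_two_pi_mul_intCast (∑ l, θ l)).1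
  have hn : (n : ℝ) ≠ 0 := NeZero.ne _
  set c := (∑ l, θ l - 2 * π * k) / n
  have hsum : ∑ l : ZMod n, (c + if l = 0 then k * (2 * π) else 0) = ∑ l, θ l := by
    rw [Finset.sum_add_distrib, Finset.sum_ite_eq' Finset.univ, if_pos (Finset.mem_univ 0),
      Finset.sum_const, Finset.card_univ, ZMod.card, nsmul_eq_mul, mul_div_cancel₀ _ hn]
    ring
  obtain ⟨s, hs⟩ := exists_add_sub_eq_of_sum_eq hsum
  refine ⟨s, fun l => ?_⟩
  rw [hs, hk, ← Nat.abs_cast n, ← abs_div, Real.cos_abs]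
  split_ifs
  · exact Real.cos_add_int_mul_two_pi c k
  · rw [add_zero]

end ZMod

def magEnergy (b θ : X → X → ℝ) (p : ℝ) (W : Finset X) (τ : X → ℂ) : ℝ :=
  (1 / 2) * ∑ x ∈ W, ∑ y ∈ W, b x y * ‖τ x - Complex.exp ((θ x y : ℂ) * Complex.I) * τ y‖ ^ p

section Frustration

variable {b θ : X → X → ℝ} {p : ℝ} {W : Finset X}

lemma magEnergy_nonneg (hb : ∀ x y, 0 ≤ b x y) (τ : X → ℂ) : 0 ≤ magEnergy b θ p W τ :=
  mul_nonneg (by norm_num) <| Finset.sum_nonneg fun x _ => Finset.sum_nonneg fun y _ =>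
    mul_nonneg (hb x y) (Real.rpow_nonneg (norm_nonneg _) _)

lemma frust_eq_of_le_magEnergy {r : ℝ}
    (hle : ∀ τ : X → ℂ, (∀ x ∈ W, ‖τ x‖ = 1) → r ≤ magEnergy b θ p W τ)
    {τ₀ : X → ℂ} (hτ₀ : ∀ x ∈ W, ‖τ₀ x‖ = 1) (heq : magEnergy b θ p W τ₀ = r) :
    frust b θ p W = r :=
  IsLeast.csInf_eq ⟨⟨τ₀, hτ₀, heq.symm⟩, by rintro _ ⟨τ, hτ, rfl⟩; exact hle τ hτ⟩

end Frustration

section Cycle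

variable {n : ℕ} [NeZero n] {Y : Type*} (Φ : Y ≃ ZMod n)

/-- `∑ j, cyclePhase Φ θ j` is the flux `F_θ(C)`. -/
def cyclePhase (θ : Y → Y → ℝ) (j : ZMod n) : ℝ :=
  θ (Φ.symm j) (Φ.symm (j + 1))

/-- Cutting the cycle at `v` leaves a path, on which the magnetic potential is a pure gauge. -/
lemma exists_unit_gauge_of_cut (θ : Y → Y → ℝ) (v : Y) :
    ∃ τ : Y → ℂ, (∀ x, ‖τ x‖ = 1) ∧
      ∀ x y, Φ y = Φ x + 1 → y ≠ v → τ x = Complex.exp (θ x y * Complex.I) * τ y := by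
  obtain ⟨s, hs⟩ := ZMod.exists_add_one_eq_add_of_ne (fun j => -cyclePhase Φ θ j) (Φ v)
  refine ⟨fun x => Complex.exp (s (Φ x) * Complex.I), fun x => Complex.norm_exp_ofReal_mul_I _,
    fun x y hxy hyv => ?_⟩
  have hs' := hs (Φ x) (hxy ▸ fun h => hyv (Φ.injective h))
  simp only [cyclePhase, ← hxy, Equiv.symm_apply_apply] at hs'
  rw [← Complex.exp_add, hs']
  push_cast
  ring_nf

variable {b θ : Y → Y → ℝ}

lemma frust_cycle_eq_zero_of_notMem
    (hb : ∀ x y, b x y = if (Φ x - Φ y = 1 ∨ Φ x - Φ y = -1) then 1 else 0)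
    (hθ : ∀ x y, ∃ k : ℤ, θ x y + θ y x = 2 * Real.pi * k) {p : ℝ} (hp : p ≠ 0)
    {W : Finset Y} {v : Y} (hv : v ∉ W) :
    frust b θ p W = 0 := by
  have hb0 : ∀ x y, 0 ≤ b x y := fun x y => by rw [hb]; split_ifs <;> norm_num
  obtain ⟨τ, hτ, hpar⟩ := exists_unit_gauge_of_cut Φ θ v
  refine frust_eq_of_le_magEnergy (fun τ _ => magEnergy_nonneg hb0 τ) (fun x _ => hτ x) ?_
  refine mul_eq_zero_of_right _ <| Finset.sum_eq_zero fun x hx => Finset.sum_eq_zero fun y hy => ?_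
  have hxv : x ≠ v := fun h => hv (h ▸ hx)
  have hyv : y ≠ v := fun h => hv (h ▸ hy)
  rw [hb]
  split_ifs with hxy
  · suffices ‖τ x - Complex.exp (θ x y * Complex.I) * τ y‖ = 0 by
      rw [this, Real.zero_rpow hp, mul_zero]
    rcases hxy with hxy | hxy
    · rw [Complex.norm_sub_exp_mul_comm (hθ x y), hpar y x (by rw [← hxy]; ring) hxv, sub_self,
        norm_zero]
    · rw [hpar x y (by linear_combination -hxy) hyv, sub_self, norm_zero]
  · rw [zero_mul]

variable [Fintype Y]

lemma magEnergy_univ_cycle (hn : 3 ≤ n)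
    (hb : ∀ x y, b x y = if (Φ x - Φ y = 1 ∨ Φ x - Φ y = -1) then 1 else 0)
    (hθ : ∀ x y, ∃ k : ℤ, θ x y + θ y x = 2 * Real.pi * k) (τ : Y → ℂ) :
    magEnergy b θ 2 Finset.univ τ = ∑ l, ‖τ (Φ.symm l) -
      Complex.exp (cyclePhase Φ θ l * Complex.I) * τ (Φ.symm (l + 1))‖ ^ 2 := by
  set g : ZMod n → ZMod n → ℝ := fun j l =>
    ‖τ (Φ.symm j) - Complex.exp (θ (Φ.symm j) (Φ.symm l) * Complex.I) * τ (Φ.symm l)‖ ^ 2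
  have hsymm : ∀ l, g (l + 1) l = g l (l + 1) := fun l => by
    simp only [g, Complex.norm_sub_exp_mul_comm (hθ _ _)]
  have hreindex : ∀ F : Y → Y → ℝ, ∑ x, ∑ y, F x y = ∑ j, ∑ l, F (Φ.symm j) (Φ.symm l) :=
    fun F => by simp only [Equiv.sum_comp Φ.symm (F _), Equiv.sum_comp Φ.symm (fun x => ∑ y, F x y)]
  rw [magEnergy, hreindex]
  simp only [hb, Equiv.apply_symm_apply, Real.rpow_two, ite_mul, one_mul, zero_mul]
  rw [ZMod.sum_sum_ite_sub_eq_one_or_neg_one hn g]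
  simp only [hsymm, ← two_mul, ← Finset.mul_sum, g, cyclePhase]
  ring

lemma frust_univ_cycle (hn : 3 ≤ n)
    (hb : ∀ x y, b x y = if (Φ x - Φ y = 1 ∨ Φ x - Φ y = -1) then 1 else 0)
    (hθ : ∀ x y, ∃ k : ℤ, θ x y + θ y x = 2 * Real.pi * k) :
    frust b θ 2 Finset.univ = n * ‖(1 : ℂ) - Complex.exp
      (((‖((∑ j, cyclePhase Φ θ j : ℝ) : AddCircle (2 * π))‖ / n : ℝ) : ℂ) * Complex.I)‖ ^ 2 := by
  have henergy : ∀ (τ : Y → ℂ) (s : ZMod n → ℝ),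
      (∀ l, τ (Φ.symm l) = Complex.exp (s l * Complex.I)) → magEnergy b θ 2 Finset.univ τ =
        ∑ l, 2 * (1 - Real.cos (cyclePhase Φ θ l + s (l + 1) - s l)) :=
    fun τ s hτs => by
      simp only [magEnergy_univ_cycle Φ hn hb hθ, hτs, Complex.norm_exp_sub_exp_mul_exp_sq]
  rw [Complex.norm_one_sub_exp_ofReal_mul_I_sq]
  obtain ⟨s, hs⟩ := ZMod.exists_cos_add_sub_eq (cyclePhase Φ θ)
  refine frust_eq_of_le_magEnergy (fun τ hτ => ?_)
    (fun x _ => Complex.norm_exp_ofReal_mul_I (s (Φ x)))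
    ((henergy _ s fun l => by rw [Equiv.apply_symm_apply]).trans ?_)
  · have hτs : ∀ l, τ (Φ.symm l) = Complex.exp ((τ (Φ.symm l)).arg * Complex.I) := fun l => by
      simpa [hτ _ (Finset.mem_univ _)] using (Complex.norm_mul_exp_arg_mul_I (τ (Φ.symm l))).symm
    rw [henergy τ _ hτs, ← Finset.mul_sum, mul_left_comm]
    exact mul_le_mul_of_nonneg_left
      (ZMod.card_mul_one_sub_cos_le_sum _ fun l => (τ (Φ.symm l)).arg) zero_le_two
  · simp only [hs, Finset.sum_const, Finset.card_univ, ZMod.card, nsmul_eq_mul]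

end Cycle

/-- for a magnetic cycle of length `n` with standard edge weights,
`ι_{2,θ}(W) = n|1 − e^{iδ/n}|²` if `W = Y` and `0` otherwise, where `F` is a real
representative of the flux and `δ = min_{k∈ℤ} |F − 2kπ|`. -/
theorem frust_two_cycle (n : ℕ) [NeZero n] (hn : 3 ≤ n)
    {Y : Type*} [Fintype Y] (Φ : Y ≃ ZMod n)
    (b θ : Y → Y → ℝ) (m : Y → ℝ)
    (hb : ∀ x y, b x y = if (Φ x - Φ y = 1 ∨ Φ x - Φ y = -1) then 1 else 0)
    (hG : IsMagneticGraph b θ m)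
    (F : ℝ)
    (hF : ∃ k : ℤ, F = (∑ j : ZMod n, θ (Φ.symm j) (Φ.symm (j + 1))) + 2 * Real.pi * k)
    (δ : ℝ) (hδ : δ = sInf {d : ℝ | ∃ k : ℤ, d = |F - 2 * Real.pi * k|})
    (W : Finset Y) :
    frust b θ 2 W =
      if W = Finset.univ then
        (n : ℝ) * ‖(1 : ℂ) - Complex.exp (((δ / n : ℝ) : ℂ) * Complex.I)‖ ^ 2
      else 0 := by
  obtain ⟨-, -, -, -, hθ, -⟩ := hG
  have hδ_flux : δ = ‖((∑ j, cyclePhase Φ θ j : ℝ) : AddCircle (2 * π))‖ := by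
    obtain ⟨k, rfl⟩ := hF
    rw [hδ, (AddCircle.isLeast_abs_sub_two_pi_mul_intCast _).csInf_eq,
      AddCircle.coe_add_two_pi_mul_intCast]
    rfl
  split_ifs with hW
  · rw [hW, hδ_flux]
    exact frust_univ_cycle Φ hn hb hθ
  · obtain ⟨v, hv⟩ : ∃ v, v ∉ W := by simpa [Finset.eq_univ_iff_forall] using hW
    exact frust_cycle_eq_zero_of_notMem Φ hb hθ two_ne_zero hv
end
end
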